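/- arXiv:2010.11523 — 4 statements merged into one kernel-verified Lean document; each statement's English description precedes it below -/
import Mathlib

section
/- If value assignment a_{k+1}←x is dominated by a_{k+1}←y given a partial solution, then removing x from the domain of a_{k+1} does not increase the minimum objective value achievable from that partial solution: the minimum of f over all completions of the partial solution equals the minimum of f over all completions in which a_{k+1} is not assigned x, provided the domain d_{k+1} contains at least the two values x and y. -/
/-- Removing a dominated value from the domain of the next decision variable
does not change the minimum objective value achievable from the partial
solution. `C` is the (nonempty) type of completions of the remaining
variables, `d` the domain of the next variable, and `f v c` the objective
value (∞ if infeasible) of the completed solution. -/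
theorem dominated_removal_preserves_min {D C : Type*} [Nonempty C]
    (f : D → C → EReal) (d : Set D) (x y : D)
    (hx : x ∈ d) (hy : y ∈ d) (hxy : x ≠ y)
    (hdom : ∃ cy : C, ∀ cx : C, f y cy ≤ f x cx) :
    sInf {z : EReal | ∃ v ∈ d, ∃ c : C, z = f v c} =
      sInf {z : EReal | ∃ v ∈ d, v ≠ x ∧ ∃ c : C, z = f v c} := by
  obtain ⟨cy, hcy⟩ := hdom
  apply le_antisymm
  · exact sInf_le_sInf (fun z ⟨v, hv, _, hc⟩ => ⟨v, hv, hc⟩)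
  · apply le_sInf
    rintro z ⟨v, hv, c, rfl⟩
    by_cases hvx : v = x
    · subst hvx
      exact le_trans (sInf_le ⟨y, hy, hxy.symm, cy, rfl⟩) (hcy c)
    · exact sInf_le ⟨v, hv, hvx, c, rfl⟩
end

section
/- The first quay crane lower bound is valid: given a partial assignment of the first b bays to cranes with earliestTime values computed as in Algorithm 1, the makespan earliestTime[0][n-1] of any completion of the assignment is at least earliestTime[m-1][b-1] + max(p_b, p_{b+1}, …, p_{n-1}). -/
/-- One column of the earliestTime recursion: given the previous column `prev`,
the crane `σb` assigned to the current bay and its processing time `pb`,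
compute the value for crane `k` (cranes are processed from `m-1` down to `0`,
and crane `k` waits for crane `k+1`). -/
def etColStep (m σb pb : ℕ) (prev : ℕ → ℕ) (k : ℕ) : ℕ :=
  if _h : k + 1 < m then
    max (prev k + (if σb = k then pb else 0)) (etColStep m σb pb prev (k + 1))
  else
    prev k + (if σb = k then pb else 0)
termination_by m - k
decreasing_by omega

/-- The column of earliestTime values for bay `b` (Algorithm 1). -/
def etCol (m : ℕ) (σ p : ℕ → ℕ) : ℕ → ℕ → ℕ
  | 0 => etColStep m (σ 0) (p 0) (fun _ => 0)
  | b + 1 => etColStep m (σ (b + 1)) (p (b + 1)) (etCol m σ p b)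

/-- `earliestTime m σ p k b` : the earliest time crane `k` can move past
bay `b`, as computed by the dynamic programming recursion of Algorithm 1. -/
def earliestTime (m : ℕ) (σ p : ℕ → ℕ) (k b : ℕ) : ℕ :=
  etCol m σ p b k

lemma step_ge_aux (m σb pb : ℕ) (prev : ℕ → ℕ) :
    ∀ d k, k + d < m →
    prev (k + d) + (if σb = k + d then pb else 0) ≤ etColStep m σb pb prev k := by
  intro d
  induction d with
  | zero =>
    intro k hk
    simp only [Nat.add_zero]
    rw [etColStep]
    by_cases h1 : k + 1 < m
    · rw [dif_pos h1]
      exact le_max_left _ _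
    · rw [dif_neg h1]
  | succ d IH =>
    intro k hk
    rw [etColStep]
    have h1 : k + 1 < m := by omega
    rw [dif_pos h1]
    refine le_trans ?_ (le_max_right _ _)
    have := IH (k + 1) (by omega)
    have e : k + 1 + d = k + (d + 1) := by omega
    rwa [e] at this

lemma step_ge (m σb pb : ℕ) (prev : ℕ → ℕ) (k j : ℕ) (hkj : k ≤ j) (hj : j < m) :
    prev j + (if σb = j then pb else 0) ≤ etColStep m σb pb prev k := by
  have := step_ge_aux m σb pb prev (j - k) k (by omega)
  rwa [Nat.add_sub_cancel' hkj] at this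

lemma prev_le_step (m σb pb : ℕ) (prev : ℕ → ℕ) (k : ℕ) (hk : k < m) :
    prev k ≤ etColStep m σb pb prev k :=
  le_trans (Nat.le_add_right _ _) (step_ge m σb pb prev k k le_rfl hk)

lemma step_anti (m σb pb : ℕ) (prev : ℕ → ℕ) :
    ∀ d k, k + d < m →
    etColStep m σb pb prev (k + d) ≤ etColStep m σb pb prev k := by
  intro d
  induction d with
  | zero => intro k _; rfl
  | succ d IH =>
    intro k hk
    have h1 : k + 1 < m := by omega
    calc etColStep m σb pb prev (k + (d + 1))
        ≤ etColStep m σb pb prev (k + 1) := by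
          have := IH (k + 1) (by omega)
          have e : k + 1 + d = k + (d + 1) := by omega
          rwa [e] at this
      _ ≤ etColStep m σb pb prev k := by
          conv_rhs => rw [etColStep, dif_pos h1]
          exact le_max_right _ _

lemma etCol_mono_bay (m : ℕ) (σ p : ℕ → ℕ) (k : ℕ) (hk : k < m) :
    ∀ b b', b ≤ b' → etCol m σ p b k ≤ etCol m σ p b' k := by
  intro b b' hbb
  induction b' with
  | zero =>
    have hb0 : b = 0 := Nat.le_zero.mp hbb
    rw [hb0]
  | succ b' IH =>
    rcases Nat.eq_or_lt_of_le hbb with h | h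
    · rw [h]
    · exact le_trans (IH (by omega)) (prev_le_step m _ _ _ k hk)

lemma etCol_anti (m : ℕ) (σ p : ℕ → ℕ) (b k k' : ℕ) (hkk : k ≤ k') (hk' : k' < m) :
    etCol m σ p b k' ≤ etCol m σ p b k := by
  have key : ∀ σb pb prev, etColStep m σb pb prev k' ≤ etColStep m σb pb prev k := by
    intro σb pb prev
    have := step_anti m σb pb prev (k' - k) (k := k) (by omega)
    rwa [Nat.add_sub_cancel' hkk] at this
  cases b with
  | zero => simp only [etCol]; exact key _ _ _
  | succ b => simp only [etCol]; exact key _ _ _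


/-- The first lower bound for the quay crane scheduling relaxation: the
makespan of any completion of a partial assignment of the first `b` bays is at
least `earliestTime[m-1][b-1] + max (p_b, …, p_{n-1})`. -/
theorem quay_crane_lower_bound_one (m n b : ℕ) (σ p : ℕ → ℕ)
    (hm : 1 ≤ m) (hb : 1 ≤ b) (hbn : b < n) (hσ : ∀ i, σ i < m) :
    earliestTime m σ p (m - 1) (b - 1) + (Finset.Ico b n).sup p ≤
      earliestTime m σ p 0 (n - 1) := by
  obtain ⟨j, hj, hjsup⟩ := Finset.exists_mem_eq_sup (Finset.Ico b n)
    (by rw [Finset.nonempty_Ico]; omega) p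
  rw [Finset.mem_Ico] at hj
  rw [hjsup]
  unfold earliestTime
  have hj1 : 1 ≤ j := le_trans hb hj.1
  calc etCol m σ p (b - 1) (m - 1) + p j
      ≤ etCol m σ p (j - 1) (m - 1) + p j := by
        gcongr ?_ + _
        exact etCol_mono_bay m σ p (m - 1) (by omega) (b - 1) (j - 1) (by omega)
    _ ≤ etCol m σ p (j - 1) (σ j) + p j := by
        gcongr ?_ + _
        exact etCol_anti m σ p (j - 1) (σ j) (m - 1) (by have := hσ j; omega) (by omega)
    _ ≤ etCol m σ p j 0 := by
        have hrec : etCol m σ p j = etColStep m (σ j) (p j) (etCol m σ p (j - 1)) := by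
          obtain ⟨j', rfl⟩ : ∃ j', j = j' + 1 := ⟨j - 1, by omega⟩
          simp [etCol]
        rw [hrec]
        have := step_ge m (σ j) (p j) (etCol m σ p (j - 1)) 0 (σ j) (Nat.zero_le _) (hσ j)
        simpa using this
    _ ≤ etCol m σ p (n - 1) 0 := etCol_mono_bay m σ p 0 (by omega) j (n - 1) (by omega)
end

section
/- The second quay crane lower bound is valid: given a partial assignment of the first b bays with earliestTime values as in Algorithm 1, the makespan of any completion is at least earliestTime[0][b-1] + max(0, ⌈(∑_{i=b}^{n-1} p_i − ∑_{i=1}^{m-1} (earliestTime[0][b-1] − earliestTime[i][b-1])) / min(m, n−b)⌉). -/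
open Finset

section Recursion

variable (m σb pb : ℕ) (prev : ℕ → ℕ)

lemma le_etColStep (k : ℕ) :
    prev k + (if σb = k then pb else 0) ≤ etColStep m σb pb prev k := by
  rw [etColStep]
  by_cases hk : k + 1 < m
  · rw [dif_pos hk]
    exact le_max_left _ _
  · rw [dif_neg hk]

lemma etColStep_succ_le {k : ℕ} (hk : k + 1 < m) :
    etColStep m σb pb prev (k + 1) ≤ etColStep m σb pb prev k := by
  conv_rhs => rw [etColStep, dif_pos hk]
  exact le_max_right _ _

lemma etColStep_le_of_le {j k : ℕ} (hkj : k ≤ j) (hj : j < m) :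
    etColStep m σb pb prev j ≤ etColStep m σb pb prev k := by
  induction j, hkj using Nat.le_induction with
  | base => exact le_rfl
  | succ j _ ih => exact (etColStep_succ_le m σb pb prev hj).trans (ih (by omega))

end Recursion

section EarliestTime

variable (m : ℕ) (σ p : ℕ → ℕ)

lemma earliestTime_le_of_le (b : ℕ) {j k : ℕ} (hkj : k ≤ j) (hj : j < m) :
    earliestTime m σ p j b ≤ earliestTime m σ p k b := by
  cases b <;> exact etColStep_le_of_le _ _ _ _ hkj hj

def craneLoad (s : Finset ℕ) (k : ℕ) : ℕ :=
  ∑ i ∈ s, if σ i = k then p i else 0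

lemma earliestTime_add_craneLoad_le {b b' : ℕ} (hbb' : b ≤ b') (k : ℕ) :
    earliestTime m σ p k b + craneLoad σ p (Ico (b + 1) (b' + 1)) k ≤
      earliestTime m σ p k b' := by
  induction b', hbb' using Nat.le_induction with
  | base => simp [craneLoad]
  | succ b' hbb' ih =>
    rw [craneLoad, sum_Ico_succ_top (by omega), ← craneLoad, ← add_assoc]
    exact (Nat.add_le_add_right ih _).trans (le_etColStep m _ _ _ k)

lemma sum_craneLoad {s : Finset ℕ} (hσ : ∀ i ∈ s, σ i < m) :
    ∑ k ∈ range m, craneLoad σ p s k = ∑ i ∈ s, p i := by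
  simp only [craneLoad]
  rw [sum_comm]
  exact sum_congr rfl fun i hi => by simp [mem_range.mpr (hσ i hi)]

lemma card_craneLoad_ne_zero_le (s : Finset ℕ) :
    #{k ∈ range m | craneLoad σ p s k ≠ 0} ≤ #s := by
  calc #{k ∈ range m | craneLoad σ p s k ≠ 0} ≤ #(s.image σ) := by
        refine card_le_card fun k hk => ?_
        obtain ⟨i, hi, hne⟩ := exists_ne_zero_of_sum_ne_zero (mem_filter.mp hk).2
        exact mem_image.mpr ⟨i, hi, by by_contra h; simp [h] at hne⟩
    _ ≤ #s := card_image_le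

end EarliestTime

/-- `E k` is when crane `k` becomes free, `L k` its remaining load, `T` the makespan and `c` a
bound on the number of cranes with a nonzero load. -/
lemma sum_load_le {R : Type*} [CommRing R] [LinearOrder R] [IsStrictOrderedRing R]
    {m c : ℕ} {E L : ℕ → R} {T : R}
    (hfinish : ∀ k < m, E k + L k ≤ T) (hE : ∀ k < m, E k ≤ E 0) (hT : E 0 ≤ T)
    (hc : #{k ∈ range m | L k ≠ 0} ≤ c) :
    ∑ k ∈ range m, L k ≤ c * (T - E 0) + ∑ k ∈ Ico 1 m, (E 0 - E k) := by
  set K := {k ∈ range m | L k ≠ 0}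
  have hKm : K ⊆ range m := filter_subset _ _
  have hgap : ∑ k ∈ range m, (E 0 - E k) = ∑ k ∈ Ico 1 m, (E 0 - E k) := by
    rcases Nat.eq_zero_or_pos m with rfl | hm
    · simp
    · rw [range_eq_Ico, sum_eq_sum_Ico_succ_bot hm, sub_self, zero_add]
  calc ∑ k ∈ range m, L k = ∑ k ∈ K, L k := (sum_filter_ne_zero _).symm
    _ ≤ ∑ k ∈ K, ((T - E 0) + (E 0 - E k)) := sum_le_sum fun k hk => by
        linarith [hfinish k (mem_range.mp (hKm hk))]
    _ = #K * (T - E 0) + ∑ k ∈ K, (E 0 - E k) := by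
        rw [sum_add_distrib, sum_const, nsmul_eq_mul]
    _ ≤ c * (T - E 0) + ∑ k ∈ range m, (E 0 - E k) := by
        refine add_le_add (mul_le_mul_of_nonneg_right (by exact_mod_cast hc) (sub_nonneg.mpr hT))
          (sum_le_sum_of_subset_of_nonneg hKm fun k hk _ =>
            sub_nonneg.mpr (hE k (mem_range.mp hk)))
    _ = c * (T - E 0) + ∑ k ∈ Ico 1 m, (E 0 - E k) := by rw [hgap]

lemma max_zero_ceil_div_le {x : ℚ} {c : ℕ} {D : ℤ} (hD : 0 ≤ D) (h : x ≤ c * D) :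
    max 0 ⌈x / c⌉ ≤ D :=
  max_le hD <| Int.ceil_le.mpr <| div_le_of_le_mul₀ c.cast_nonneg (by exact_mod_cast hD)
    (by rwa [mul_comm])

/-- The second lower bound for the quay crane scheduling relaxation. -/
theorem quay_crane_lower_bound_two (m n b : ℕ) (σ p : ℕ → ℕ)
    (hm : 1 ≤ m) (hb : 1 ≤ b) (hbn : b < n) (hσ : ∀ i, σ i < m) :
    (earliestTime m σ p 0 (b - 1) : ℤ) +
      max 0
        ⌈((∑ i ∈ Finset.Ico b n, (p i : ℚ)) -
            ∑ i ∈ Finset.Ico 1 m,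
              ((earliestTime m σ p 0 (b - 1) : ℚ) -
                (earliestTime m σ p i (b - 1) : ℚ))) /
          ((min m (n - b) : ℕ) : ℚ)⌉ ≤
      (earliestTime m σ p 0 (n - 1) : ℤ) := by
  have hbays : Ico (b - 1 + 1) (n - 1 + 1) = Ico b n := by
    rw [Nat.sub_add_cancel hb, Nat.sub_add_cancel (by omega)]
  have hfinish (k : ℕ) (hk : k < m) :
      earliestTime m σ p k (b - 1) + craneLoad σ p (Ico b n) k ≤
        earliestTime m σ p 0 (n - 1) :=
    hbays ▸ (earliestTime_add_craneLoad_le m σ p (by omega) k).trans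
      (earliestTime_le_of_le m σ p _ (Nat.zero_le k) hk)
  have hbusy : #{k ∈ range m | craneLoad σ p (Ico b n) k ≠ 0} ≤ min m (n - b) :=
    le_min ((card_filter_le _ _).trans_eq (card_range m))
      ((card_craneLoad_ne_zero_le m σ p _).trans_eq (Nat.card_Ico b n))
  have hgrowth : earliestTime m σ p 0 (b - 1) ≤ earliestTime m σ p 0 (n - 1) :=
    (Nat.le_add_right _ _).trans (hfinish 0 (by omega))
  have hwork := sum_load_le (R := ℚ) (E := fun k => (earliestTime m σ p k (b - 1) : ℚ))
    (L := fun k => (craneLoad σ p (Ico b n) k : ℚ)) (T := earliestTime m σ p 0 (n - 1))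
    (fun k hk => by exact_mod_cast hfinish k hk)
    (fun k hk => by exact_mod_cast earliestTime_le_of_le m σ p _ (Nat.zero_le k) hk)
    (by exact_mod_cast hgrowth) (by simpa only [ne_eq, Nat.cast_eq_zero] using hbusy)
  rw [← Nat.cast_sum, sum_craneLoad m σ p fun i _ => hσ i, Nat.cast_sum] at hwork
  have hextra := max_zero_ceil_div_le (c := min m (n - b))
    (x := (∑ i ∈ Ico b n, (p i : ℚ)) - ∑ i ∈ Ico 1 m,
      ((earliestTime m σ p 0 (b - 1) : ℚ) - (earliestTime m σ p i (b - 1) : ℚ)))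
    (D := (earliestTime m σ p 0 (n - 1) : ℤ) - earliestTime m σ p 0 (b - 1))
    (sub_nonneg.mpr (by exact_mod_cast hgrowth))
    (by rw [Int.cast_sub, Int.cast_natCast, Int.cast_natCast]; linarith)
  linarith
end

section
/- The greedy knapsack heuristic produces a feasible solution whose profit differs from the Dantzig upper bound by less than p_b, the profit of the break item: if the greedy algorithm adds items in order of nonincreasing profit-to-weight ratio, skipping any item that does not fit, then its resulting profit P satisfies P ≥ ∑_{i=1}^{b-1} p_i, and consequently U − P < p_b where U is the Dantzig bound U = p_b·(c − ∑_{i=1}^{b-1} w_i)/w_b + ∑_{i=1}^{b-1} p_i. -/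
/-- `greedy w p n i r` : total profit obtained by the greedy knapsack
heuristic on items `i, i+1, …, n-1` with remaining capacity `r`, adding each
item whose weight still fits. -/
def greedy (w p : ℕ → ℕ) (n : ℕ) (i r : ℕ) : ℕ :=
  if _h : i < n then
    if w i ≤ r then p i + greedy w p n (i + 1) (r - w i)
    else greedy w p n (i + 1) r
  else 0
termination_by n - i
decreasing_by all_goals omega

/-!
Every item before the break item fits into the capacity left over by its predecessors, so the
greedy heuristic takes all of them and collects at least `∑_{i<b} p i`. The Dantzig bound exceeds
that sum by `p b` times the fraction `(c - ∑_{i<b} w i) / w b < 1` of the break item.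
-/

theorem sum_Ico_le_greedy (w p : ℕ → ℕ) {n b : ℕ} (hbn : b ≤ n) (i r : ℕ)
    (hr : ∑ j ∈ Finset.Ico i b, w j ≤ r) : ∑ j ∈ Finset.Ico i b, p j ≤ greedy w p n i r := by
  rcases lt_or_ge i b with hib | hbi
  · rw [Finset.sum_eq_sum_Ico_succ_bot hib] at hr ⊢
    have ih := sum_Ico_le_greedy w p hbn (i + 1) (r - w i) (by omega)
    rw [greedy, dif_pos (by omega), if_pos (by omega)]
    omega
  · simp [Finset.Ico_eq_empty_of_le hbi]
termination_by b - i

theorem sum_range_le_greedy (w p : ℕ → ℕ) {n b : ℕ} (hbn : b ≤ n) {c : ℕ}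
    (hc : ∑ i ∈ Finset.range b, w i ≤ c) : ∑ i ∈ Finset.range b, p i ≤ greedy w p n 0 c := by
  rw [Finset.range_eq_Ico] at hc ⊢
  exact sum_Ico_le_greedy w p hbn 0 c hc

theorem mul_div_add_sub_lt {K : Type*} [Field K] [LinearOrder K] [IsStrictOrderedRing K]
    {a x y s P : K} (ha : 0 < a) (hx : 0 ≤ x) (hxy : x < y) (hsP : s ≤ P) :
    a * (x / y) + s - P < a := by
  have hfrac : x / y < 1 := (div_lt_one (hx.trans_lt hxy)).mpr hxy
  nlinarith

theorem greedy_close_to_dantzig_general (n : ℕ) (w p : ℕ → ℕ) (c : ℕ)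
    (hp : ∀ i, 0 < p i)
    (b : ℕ) (hbn : b < n)
    (hb1 : ∑ i ∈ Finset.range b, w i ≤ c)
    (hb2 : c < ∑ i ∈ Finset.range (b + 1), w i) :
    (∑ i ∈ Finset.range b, p i ≤ greedy w p n 0 c) ∧
    ((p b : ℚ) * (((c : ℚ) - ∑ i ∈ Finset.range b, (w i : ℚ)) / (w b : ℚ)) +
        (∑ i ∈ Finset.range b, (p i : ℚ))) - (greedy w p n 0 c : ℚ) < (p b : ℚ) := by
  have hgreedy := sum_range_le_greedy w p hbn.le hb1
  refine ⟨hgreedy, mul_div_add_sub_lt (by exact_mod_cast hp b) ?_ ?_ (by exact_mod_cast hgreedy)⟩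
  · rw [sub_nonneg]
    exact_mod_cast hb1
  · rw [Finset.sum_range_succ] at hb2
    rw [sub_lt_iff_lt_add']
    exact_mod_cast hb2

/-- The greedy knapsack heuristic collects at least the profit of all items
before the break item, and its profit is within `p b` of the Dantzig bound. -/
theorem greedy_close_to_dantzig (n : ℕ) (w p : ℕ → ℕ) (c : ℕ)
    (hw : ∀ i, 0 < w i) (hp : ∀ i, 0 < p i)
    (hsort : ∀ i, i + 1 < n → (p (i + 1) : ℚ) / (w (i + 1) : ℚ) ≤ (p i : ℚ) / (w i : ℚ))
    (b : ℕ) (hbn : b < n)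
    (hb1 : ∑ i ∈ Finset.range b, w i ≤ c)
    (hb2 : c < ∑ i ∈ Finset.range (b + 1), w i) :
    (∑ i ∈ Finset.range b, p i ≤ greedy w p n 0 c) ∧
    ((p b : ℚ) * (((c : ℚ) - ∑ i ∈ Finset.range b, (w i : ℚ)) / (w b : ℚ)) +
        (∑ i ∈ Finset.range b, (p i : ℚ))) - (greedy w p n 0 c : ℚ) < (p b : ℚ) :=
  greedy_close_to_dantzig_general n w p c hp b hbn hb1 hb2
end
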